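/- Let ψ ∈ ℂ^N be a unit vector and {ψ⊥_j}_j an orthonormal family in ℂ^N each orthogonal to ψ; let {e_i}_{i=1}^{D} be the standard orthonormal basis of ℂ^D; let G_i, G_{ij}, w ∈ ℂ^M be unit vectors; and let α_i, β_{ij} ∈ ℂ satisfy Σ_i |α_i|² + Σ_{i,j} |β_{ij}|² = 1. Fix an index r and define the unit vectors u := ψ ⊗ w ⊗ e_r and η := Σ_i α_i (ψ ⊗ G_i ⊗ e_i) + Σ_{i,j} β_{ij} (ψ⊥_j ⊗ G_{ij} ⊗ e_i) in ℂ^N ⊗ ℂ^M ⊗ ℂ^D, and the unit vector χ := (e_0 ⊗ u + e_1 ⊗ η)/√2 ∈ ℂ² ⊗ (ℂ^N ⊗ ℂ^M ⊗ ℂ^D). Let Q_r := I ⊗ I ⊗ |e_r⟩⟨e_r| and let P_+ := |+⟩⟨+| be the projection onto + := (e_0 + e_1)/√2 in ℂ². Then ‖(P_+ ⊗ Q_r) χ‖² = ¼ + ¼·(|α_r|² + Σ_j |β_{rj}|²) + ½·Re(α_r · ⟨w, G_r⟩). Consequently, 2·‖(P_+ ⊗ Q_r)χ‖² − ‖(I_2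 ⊗ Q_r)χ‖² = Re(α_r · ⟨w, G_r⟩). -/

import Mathlib

/-!
Only the `e_r`-slice of the last register survives the projections. On that slice `u` and `η`
restrict to `u_r = ψ ⊗ w` and `η_r = α_r (ψ ⊗ G_r) + ∑ⱼ β_rj (ψ⊥ⱼ ⊗ G_rj)`, so that
`‖(I₂ ⊗ Q_r)χ‖² = (‖u_r‖² + ‖η_r‖²)/2` and `‖(P₊ ⊗ Q_r)χ‖² = ‖u_r + η_r‖²/4`.
Since `ψ ⊥ ψ⊥ⱼ`, the vectors `ψ ⊗ G_r` and `ψ⊥ⱼ ⊗ G_rj` are orthonormal, whence `‖u_r‖ = 1`,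
`‖η_r‖² = |α_r|² + ∑ⱼ |β_rj|²` and `⟨u_r, η_r⟩ = α_r ⟨w, G_r⟩`; expanding `‖u_r + η_r‖²` finishes.
-/

open scoped InnerProductSpace

lemma Orthonormal.norm_sum_smul_sq {𝕜 E J : Type*} [RCLike 𝕜] [NormedAddCommGroup E]
    [InnerProductSpace 𝕜 E] {v : J → E} (hv : Orthonormal 𝕜 v) (c : J → 𝕜) (s : Finset J) :
    ‖∑ j ∈ s, c j • v j‖ ^ 2 = ∑ j ∈ s, ‖c j‖ ^ 2 := by
  rw [norm_sq_eq_re_inner (𝕜 := 𝕜), hv.inner_sum]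
  simp [RCLike.conj_mul]

namespace EuclideanSpace

variable {𝕜 : Type*} [RCLike 𝕜] {ι κ : Type*}

noncomputable def kron (x : EuclideanSpace 𝕜 ι) (y : EuclideanSpace 𝕜 κ) :
    EuclideanSpace 𝕜 (ι × κ) :=
  WithLp.toLp 2 fun q => x q.1 * y q.2

@[simp]
lemma kron_apply (x : EuclideanSpace 𝕜 ι) (y : EuclideanSpace 𝕜 κ) (q : ι × κ) :
    kron x y q = x q.1 * y q.2 := rfl

variable [Fintype ι] [Fintype κ]

lemma inner_kron (x x' : EuclideanSpace 𝕜 ι) (y y' : EuclideanSpace 𝕜 κ) :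
    ⟪kron x y, kron x' y'⟫_𝕜 = ⟪x, x'⟫_𝕜 * ⟪y, y'⟫_𝕜 := by
  simp only [PiLp.inner_apply, RCLike.inner_apply, kron_apply, map_mul, Finset.sum_mul_sum,
    Fintype.sum_prod_type]
  exact Finset.sum_congr rfl fun _ _ => Finset.sum_congr rfl fun _ _ => by ring

lemma norm_kron (x : EuclideanSpace 𝕜 ι) (y : EuclideanSpace 𝕜 κ) :
    ‖kron x y‖ = ‖x‖ * ‖y‖ := by
  refine (sq_eq_sq₀ (norm_nonneg _) (by positivity)).1 ?_
  simp only [norm_sq_eq, mul_pow, kron_apply, norm_mul, Fintype.sum_prod_type,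
    Finset.sum_mul_sum]

lemma _root_.Orthonormal.kron {J : Type*} {v : J → EuclideanSpace 𝕜 ι}
    (hv : Orthonormal 𝕜 v) {y : J → EuclideanSpace 𝕜 κ} (hy : ∀ j, ‖y j‖ = 1) :
    Orthonormal 𝕜 fun j => kron (v j) (y j) := by
  classical
  rw [orthonormal_iff_ite] at hv ⊢
  intro i j
  rw [inner_kron, hv]
  split_ifs with h
  · subst h; rw [one_mul, inner_self_eq_norm_sq_to_K, hy]; simp
  · exact zero_mul _

lemma norm_sq_eq_of_apply_eq_ite {σ δ : Type*} [Fintype σ] [Fintype δ] [DecidableEq δ]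
    (x : EuclideanSpace 𝕜 (σ × ι × κ × δ)) (f : σ → EuclideanSpace 𝕜 (ι × κ)) (r : δ)
    (hx : ∀ s a b d, x (s, a, b, d) = if d = r then f s (a, b) else 0) :
    ‖x‖ ^ 2 = ∑ s, ‖f s‖ ^ 2 := by
  simp [norm_sq_eq, Fintype.sum_prod_type, hx, apply_ite]

end EuclideanSpace

open EuclideanSpace

section OrthogonalTensors

variable {𝕜 : Type*} [RCLike 𝕜] {ι κ J : Type*} [Fintype ι] [Fintype κ] [Fintype J]
  {ψ : EuclideanSpace 𝕜 ι} {ψperp : J → EuclideanSpace 𝕜 ι}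

lemma inner_kron_smul_kron_add_sum (hψ : ‖ψ‖ = 1) (hperpψ : ∀ j, ⟪ψ, ψperp j⟫_𝕜 = 0)
    (w g : EuclideanSpace 𝕜 κ) (y : J → EuclideanSpace 𝕜 κ) (a : 𝕜) (c : J → 𝕜) :
    ⟪kron ψ w, a • kron ψ g + ∑ j, c j • kron (ψperp j) (y j)⟫_𝕜 = a * ⟪w, g⟫_𝕜 := by
  simp [inner_add_right, inner_sum, inner_smul_right, inner_kron, hperpψ,
    inner_self_eq_norm_sq_to_K, hψ]

lemma norm_sq_smul_kron_add_sum (hψ : ‖ψ‖ = 1) (hperp : Orthonormal 𝕜 ψperp)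
    (hperpψ : ∀ j, ⟪ψ, ψperp j⟫_𝕜 = 0) {g : EuclideanSpace 𝕜 κ} (hg : ‖g‖ = 1)
    {y : J → EuclideanSpace 𝕜 κ} (hy : ∀ j, ‖y j‖ = 1) (a : 𝕜) (c : J → 𝕜) :
    ‖a • kron ψ g + ∑ j, c j • kron (ψperp j) (y j)‖ ^ 2 = ‖a‖ ^ 2 + ∑ j, ‖c j‖ ^ 2 := by
  have horth : ⟪a • kron ψ g, ∑ j, c j • kron (ψperp j) (y j)⟫_𝕜 = 0 := by
    simp [inner_sum, inner_smul_right, inner_smul_left, inner_kron, hperpψ]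
  rw [norm_add_sq (𝕜 := 𝕜), horth, (hperp.kron hy).norm_sum_smul_sq, norm_smul, norm_kron,
    hψ, hg]
  simp

end OrthogonalTensors

section SwapTest

variable {ι κ δ : Type*} [Fintype ι] [Fintype κ] [Fintype δ] [DecidableEq δ]
  {u η : EuclideanSpace ℂ (ι × κ × δ)} {χ χr χpr : EuclideanSpace ℂ (Fin 2 × ι × κ × δ)}
  {r : δ} {ur ηr : EuclideanSpace ℂ (ι × κ)}

lemma norm_sq_proj_slice
    (hχ : ∀ p : Fin 2 × ι × κ × δ,
      χ p = ((if p.1 = 0 then u p.2 else 0) + (if p.1 = 1 then η p.2 else 0)) / (Real.sqrt 2 : ℂ))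
    (hur : ∀ a b, u (a, b, r) = ur (a, b)) (hηr : ∀ a b, η (a, b, r) = ηr (a, b))
    (hχr : ∀ p : Fin 2 × ι × κ × δ, χr p = if p.2.2.2 = r then χ p else 0) :
    ‖χr‖ ^ 2 = (‖ur‖ ^ 2 + ‖ηr‖ ^ 2) / 2 := by
  rw [norm_sq_eq_of_apply_eq_ite χr ![(Real.sqrt 2 : ℂ)⁻¹ • ur, (Real.sqrt 2 : ℂ)⁻¹ • ηr] r]
  · simp [Fin.sum_univ_two, norm_smul, mul_pow]
    ring
  · intro s a b d
    rw [hχr]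
    split_ifs with h
    · subst h
      fin_cases s <;> simp [hχ, hur, hηr, div_eq_inv_mul]
    · rfl

lemma norm_sq_plus_proj_slice
    (hχ : ∀ p : Fin 2 × ι × κ × δ,
      χ p = ((if p.1 = 0 then u p.2 else 0) + (if p.1 = 1 then η p.2 else 0)) / (Real.sqrt 2 : ℂ))
    (hur : ∀ a b, u (a, b, r) = ur (a, b)) (hηr : ∀ a b, η (a, b, r) = ηr (a, b))
    (hχpr : ∀ p : Fin 2 × ι × κ × δ,
      χpr p = if p.2.2.2 = r then (χ (0, p.2) + χ (1, p.2)) / 2 else 0) :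
    ‖χpr‖ ^ 2 = ‖ur + ηr‖ ^ 2 / 4 := by
  rw [norm_sq_eq_of_apply_eq_ite χpr (fun _ => (2 * Real.sqrt 2 : ℂ)⁻¹ • (ur + ηr)) r]
  · rw [Fin.sum_univ_two, norm_smul]
    simp [mul_pow]
    ring
  · intro s a b d
    rw [hχpr]
    split_ifs with h
    · subst h
      simp [hχ, hur, hηr]
      ring
    · rfl

end SwapTest

theorem swap_test_plus_projection_probability_general
    (N M D J : ℕ)
    (ψ : EuclideanSpace ℂ (Fin N)) (hψ : ‖ψ‖ = 1)
    (ψperp : Fin J → EuclideanSpace ℂ (Fin N)) (hperp : Orthonormal ℂ ψperp)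
    (hperpψ : ∀ j, ⟪ψ, ψperp j⟫_ℂ = 0)
    (G : Fin D → EuclideanSpace ℂ (Fin M)) (hG : ∀ i, ‖G i‖ = 1)
    (Gij : Fin D → Fin J → EuclideanSpace ℂ (Fin M)) (hGij : ∀ i j, ‖Gij i j‖ = 1)
    (w : EuclideanSpace ℂ (Fin M)) (hw : ‖w‖ = 1)
    (α : Fin D → ℂ) (β : Fin D → Fin J → ℂ)
    (r : Fin D)
    -- `u = ψ ⊗ w ⊗ e_r`
    (u : EuclideanSpace ℂ (Fin N × Fin M × Fin D))
    (hu : ∀ q : Fin N × Fin M × Fin D,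
      u q = ψ q.1 * w q.2.1 * (if q.2.2 = r then 1 else 0))
    -- `η = ∑ i, α i (ψ ⊗ G i ⊗ e i) + ∑ i j, β i j (ψ⊥ j ⊗ G i j ⊗ e i)`
    (η : EuclideanSpace ℂ (Fin N × Fin M × Fin D))
    (hη : ∀ q : Fin N × Fin M × Fin D,
      η q = ∑ i, α i * (ψ q.1 * G i q.2.1 * (if q.2.2 = i then 1 else 0))
          + ∑ i, ∑ j, β i j * (ψperp j q.1 * Gij i j q.2.1 * (if q.2.2 = i then 1 else 0)))
    -- `χ = (e₀ ⊗ u + e₁ ⊗ η)/√2`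
    (χ : EuclideanSpace ℂ (Fin 2 × Fin N × Fin M × Fin D))
    (hχ : ∀ p : Fin 2 × Fin N × Fin M × Fin D,
      χ p = ((if p.1 = 0 then u p.2 else 0) + (if p.1 = 1 then η p.2 else 0))
            / (Real.sqrt 2 : ℂ))
    -- `χr = (I₂ ⊗ I ⊗ I ⊗ |e_r⟩⟨e_r|) χ`
    (χr : EuclideanSpace ℂ (Fin 2 × Fin N × Fin M × Fin D))
    (hχr : ∀ p : Fin 2 × Fin N × Fin M × Fin D,
      χr p = if p.2.2.2 = r then χ p else 0)
    -- `χpr = (|+⟩⟨+| ⊗ I ⊗ I ⊗ |e_r⟩⟨e_r|) χ`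
    (χpr : EuclideanSpace ℂ (Fin 2 × Fin N × Fin M × Fin D))
    (hχpr : ∀ p : Fin 2 × Fin N × Fin M × Fin D,
      χpr p = if p.2.2.2 = r then (χ (0, p.2) + χ (1, p.2)) / 2 else 0) :
    ‖χpr‖ ^ 2 = 1 / 4 + 1 / 4 * (‖α r‖ ^ 2 + ∑ j, ‖β r j‖ ^ 2)
        + 1 / 2 * (α r * ⟪w, G r⟫_ℂ).re ∧
    2 * ‖χpr‖ ^ 2 - ‖χr‖ ^ 2 = (α r * ⟪w, G r⟫_ℂ).re := by
  set ηr := α r • kron ψ (G r) + ∑ j, β r j • kron (ψperp j) (Gij r j)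
  have hur : ∀ n m, u (n, m, r) = kron ψ w (n, m) := by simp [hu]
  have hηr : ∀ n m, η (n, m, r) = ηr (n, m) := by
    intro n m
    simp [ηr, hη, WithLp.ofLp_sum, Finset.sum_apply, mul_ite, mul_comm]
  have hnorm_ur : ‖kron ψ w‖ = 1 := by rw [norm_kron, hψ, hw, one_mul]
  have hnorm_ηr : ‖ηr‖ ^ 2 = ‖α r‖ ^ 2 + ∑ j, ‖β r j‖ ^ 2 :=
    norm_sq_smul_kron_add_sum hψ hperp hperpψ (hG r) (hGij r) (α r) (β r)
  have hinner : ⟪kron ψ w, ηr⟫_ℂ = α r * ⟪w, G r⟫_ℂ :=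
    inner_kron_smul_kron_add_sum hψ hperpψ w (G r) (Gij r) (α r) (β r)
  rw [norm_sq_plus_proj_slice hχ hur hηr hχpr, norm_sq_proj_slice hχ hur hηr hχr,
    norm_add_sq (𝕜 := ℂ), hinner, RCLike.re_to_complex, hnorm_ur, hnorm_ηr]
  constructor <;> ring

/-- for `χ = (e₀ ⊗ u + e₁ ⊗ η)/√2` with `u = ψ ⊗ w ⊗ e_r` and
`η = ∑ i, α i (ψ ⊗ G i ⊗ e i) + ∑ i j, β i j (ψ⊥ j ⊗ G i j ⊗ e i)`, projecting the
first qubit onto `|+⟩` and the last register onto `e_r` yields norm squared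
`¼ + ¼(‖α r‖² + ∑ j ‖β r j‖²) + ½ Re(α r ⟨w, G r⟩)`; consequently
`2‖(P₊ ⊗ Q_r)χ‖² - ‖(I₂ ⊗ Q_r)χ‖² = Re(α r ⟨w, G r⟩)`. -/
theorem swap_test_plus_projection_probability
    (N M D J : ℕ)
    (ψ : EuclideanSpace ℂ (Fin N)) (hψ : ‖ψ‖ = 1)
    (ψperp : Fin J → EuclideanSpace ℂ (Fin N)) (hperp : Orthonormal ℂ ψperp)
    (hperpψ : ∀ j, ⟪ψ, ψperp j⟫_ℂ = 0)
    (G : Fin D → EuclideanSpace ℂ (Fin M)) (hG : ∀ i, ‖G i‖ = 1)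
    (Gij : Fin D → Fin J → EuclideanSpace ℂ (Fin M)) (hGij : ∀ i j, ‖Gij i j‖ = 1)
    (w : EuclideanSpace ℂ (Fin M)) (hw : ‖w‖ = 1)
    (α : Fin D → ℂ) (β : Fin D → Fin J → ℂ)
    (hnorm : ∑ i, ‖α i‖ ^ 2 + ∑ i, ∑ j, ‖β i j‖ ^ 2 = 1)
    (r : Fin D)
    -- `u = ψ ⊗ w ⊗ e_r`
    (u : EuclideanSpace ℂ (Fin N × Fin M × Fin D))
    (hu : ∀ q : Fin N × Fin M × Fin D,
      u q = ψ q.1 * w q.2.1 * (if q.2.2 = r then 1 else 0))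
    -- `η = ∑ i, α i (ψ ⊗ G i ⊗ e i) + ∑ i j, β i j (ψ⊥ j ⊗ G i j ⊗ e i)`
    (η : EuclideanSpace ℂ (Fin N × Fin M × Fin D))
    (hη : ∀ q : Fin N × Fin M × Fin D,
      η q = ∑ i, α i * (ψ q.1 * G i q.2.1 * (if q.2.2 = i then 1 else 0))
          + ∑ i, ∑ j, β i j * (ψperp j q.1 * Gij i j q.2.1 * (if q.2.2 = i then 1 else 0)))
    -- `χ = (e₀ ⊗ u + e₁ ⊗ η)/√2`
    (χ : EuclideanSpace ℂ (Fin 2 × Fin N × Fin M × Fin D))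
    (hχ : ∀ p : Fin 2 × Fin N × Fin M × Fin D,
      χ p = ((if p.1 = 0 then u p.2 else 0) + (if p.1 = 1 then η p.2 else 0))
            / (Real.sqrt 2 : ℂ))
    -- `χr = (I₂ ⊗ I ⊗ I ⊗ |e_r⟩⟨e_r|) χ`
    (χr : EuclideanSpace ℂ (Fin 2 × Fin N × Fin M × Fin D))
    (hχr : ∀ p : Fin 2 × Fin N × Fin M × Fin D,
      χr p = if p.2.2.2 = r then χ p else 0)
    -- `χpr = (|+⟩⟨+| ⊗ I ⊗ I ⊗ |e_r⟩⟨e_r|) χ`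
    (χpr : EuclideanSpace ℂ (Fin 2 × Fin N × Fin M × Fin D))
    (hχpr : ∀ p : Fin 2 × Fin N × Fin M × Fin D,
      χpr p = if p.2.2.2 = r then (χ (0, p.2) + χ (1, p.2)) / 2 else 0) :
    ‖χpr‖ ^ 2 = 1 / 4 + 1 / 4 * (‖α r‖ ^ 2 + ∑ j, ‖β r j‖ ^ 2)
        + 1 / 2 * (α r * ⟪w, G r⟫_ℂ).re ∧
    2 * ‖χpr‖ ^ 2 - ‖χr‖ ^ 2 = (α r * ⟪w, G r⟫_ℂ).re :=
  swap_test_plus_projection_probability_general N M D J ψ hψ ψperp hperp hperpψ G hG Gij hGij w hw α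
    β r u hu η hη χ hχ χr hχr χpr hχpr
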